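/- Let n ≥ 2, let H be an n×n real symmetric positive definite matrix, let Q_m be an n×n real matrix with Q_m + Q_mᵀ positive semidefinite, set Q_p = −Q_mᵀ, B = diag(−1,0,…,0,1), D_m = H⁻¹(Q_m + B/2), D_p = H⁻¹(Q_p + B/2). Let A_m = (1/2)[[1,1],[1,1]] and A_p = (1/2)[[−1,1],[1,−1]]. Let α₀ ≥ 0, α₁ ≤ 0, and let τ₁ ≤ 0, τ₃ ≤ 0, τ₂, τ₄ ∈ ℝ satisfy (α₀τ₁ − τ₂ − 1)² + 4α₀τ₁ ≤ 0 and (α₁τ₃ − τ₄ + 1)² − 4α₁τ₃ ≤ 0. Suppose w = (u, v) : ℝ → ℝⁿ × ℝⁿ is differentiable and satisfies w'(t) = −(A_p ⊗ D_p) w − (A_m ⊗ D_m) w + (τ₁ H⁻¹e₁ b₀(t), τ₂ H⁻¹e₁ b₀(t)) + (τ₃ H⁻¹eₙ b₁(t), τ₄ H⁻¹eₙ b₁(t)), where b₀(t) = u₁(t) + α₀ v₁(t), b₁(t) = uₙ(t) + α₁ vₙ(t), e₁ = (1,0,…,0)ᵀ, eₙ = (0,…,0,1)ᵀ, and ⊗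 is the Kronecker product. Then the discrete energy t ↦ u(t)ᵀHu(t) + v(t)ᵀHv(t) is nonincreasing. -/

import Mathlib

open Matrix Kronecker

/-!
Along a solution, the energy has derivative `2 (uᵀ H u' + vᵀ H v')`. Multiplying the
semidiscretization by `H` replaces `H D_±` by `Q_± + B/2`, and since `Q_p = -Q_mᵀ` the volume
terms add up to `-½ (u - v)ᵀ Q_m (u - v) - ½ (u + v)ᵀ Q_m (u + v) ≤ 0`: only the symmetric part
`Q_m + Q_mᵀ` enters. What is left is `-uᵀ B v` together with the SAT terms, i.e. one quadratic form
in `(u, v)` at each end of the grid, and the conditions on `α` and `τ` make both of them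
negative semidefinite.
-/

theorem left_boundary_form_nonpos {a τ τ' x y : ℝ} (ha : 0 ≤ a) (hτ : τ ≤ 0)
    (h : (a * τ - τ' - 1) ^ 2 + 4 * a * τ ≤ 0) :
    2 * (x * y) + 2 * (τ * x + τ' * y) * (x + a * y) ≤ 0 := by
  rcases hτ.lt_or_eq with hτ | rfl
  -- `2τ` times the form is `(2τx + (1 + aτ + τ')y)²` minus the left side of `h` times `y²`.
  · nlinarith [sq_nonneg (2 * τ * x + (1 + a * τ + τ') * y),
      mul_nonpos_of_nonpos_of_nonneg h (sq_nonneg y)]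
  · obtain rfl : τ' = -1 := by nlinarith [sq_nonneg (τ' + 1)]
    nlinarith [mul_nonneg ha (sq_nonneg y)]

theorem right_boundary_form_nonpos {a τ τ' x y : ℝ} (ha : a ≤ 0) (hτ : τ ≤ 0)
    (h : (a * τ - τ' + 1) ^ 2 - 4 * a * τ ≤ 0) :
    -(2 * (x * y)) + 2 * (τ * x + τ' * y) * (x + a * y) ≤ 0 := by
  have := left_boundary_form_nonpos (a := -a) (τ' := -τ') (x := x) (y := -y)
    (neg_nonneg.mpr ha) hτ (by linear_combination h)
  linear_combination this

theorem dotProduct_mulVec_nonneg_of_posSemidef_add_transpose {ι : Type*} [Fintype ι]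
    {Q : Matrix ι ι ℝ} (hQ : (Q + Qᵀ).PosSemidef) (x : ι → ℝ) : 0 ≤ x ⬝ᵥ Q *ᵥ x := by
  have := hQ.dotProduct_mulVec_nonneg x
  rw [star_trivial, add_mulVec, dotProduct_add, dotProduct_transpose_mulVec] at this
  linarith

theorem dotProduct_ite_val_eq {n k : ℕ} (hk : k < n) (x : Fin n → ℝ) :
    x ⬝ᵥ (fun i : Fin n => if i.val = k then 1 else 0) = x ⟨k, hk⟩ := by
  rw [dotProduct, Fintype.sum_eq_single ⟨k, hk⟩ fun i hi => by simp [Fin.ext_iff.not.mp hi]]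
  simp

theorem dotProduct_boundary_mulVec {n : ℕ} (hn : 1 < n) (x y : Fin n → ℝ) :
    x ⬝ᵥ diagonal (fun i : Fin n => if i.val = 0 then -1 else if i.val = n - 1 then 1 else 0) *ᵥ y
      = -(x ⟨0, by omega⟩ * y ⟨0, by omega⟩) + x ⟨n - 1, by omega⟩ * y ⟨n - 1, by omega⟩ := by
  rw [dotProduct, Fintype.sum_eq_add ⟨0, by omega⟩ ⟨n - 1, by omega⟩ (by simp [Fin.ext_iff]; omega)]
  · simp [mulVec_diagonal, show n - 1 ≠ 0 by omega]
  · rintro i ⟨h0, h1⟩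
    simp [mulVec_diagonal, Fin.ext_iff.not.mp h0, Fin.ext_iff.not.mp h1]

theorem kronecker_mulVec_apply {R l m p q : Type*} [CommSemiring R] [Fintype m] [Fintype q]
    (A : Matrix l m R) (D : Matrix p q R) (x : m × q → R) (a : l) (j : p) :
    (A ⊗ₖ D *ᵥ x) (a, j) = ∑ b, A a b * (D *ᵥ fun k => x (b, k)) j := by
  simp only [mulVec, dotProduct, kroneckerMap_apply, Fintype.sum_prod_type, Finset.mul_sum]
  exact Finset.sum_congr rfl fun _ _ => Finset.sum_congr rfl fun _ _ => by ring

theorem HasDerivAt.dotProduct_mulVec {ι : Type*} [Fintype ι] {x y : ℝ → ι → ℝ} {x' y' : ι → ℝ}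
    {t : ℝ} (M : Matrix ι ι ℝ) (hx : HasDerivAt x x' t) (hy : HasDerivAt y y' t) :
    HasDerivAt (fun s => x s ⬝ᵥ M *ᵥ y s) (x' ⬝ᵥ M *ᵥ y t + x t ⬝ᵥ M *ᵥ y') t := by
  simp only [dotProduct, mulVec, ← Finset.sum_add_distrib]
  exact HasDerivAt.fun_sum fun i _ => (hasDerivAt_pi.mp hx i).mul
    (HasDerivAt.fun_sum fun j _ => (hasDerivAt_pi.mp hy j).const_mul (M i j))

theorem HasDerivAt.dotProduct_mulVec_self {ι : Type*} [Fintype ι] {x : ℝ → ι → ℝ} {x' : ι → ℝ}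
    {t : ℝ} {M : Matrix ι ι ℝ} (hM : M.IsSymm) (hx : HasDerivAt x x' t) :
    HasDerivAt (fun s => x s ⬝ᵥ M *ᵥ x s) (2 * (x t ⬝ᵥ M *ᵥ x')) t := by
  convert hx.dotProduct_mulVec M hx using 1
  rw [← dotProduct_transpose_mulVec M (x t) x', hM.eq]
  ring

theorem mulVec_sat_rhs_block {ι m : Type*} [Fintype ι] [DecidableEq ι] [Fintype m]
    {H : Matrix ι ι ℝ} (hH : IsUnit H.det) (A A' : Matrix m m ℝ) (P P' : Matrix ι ι ℝ)
    (x : m × ι → ℝ) (a : m) (c c' : ℝ) (e e' : ι → ℝ) :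
    H *ᵥ (fun j => -((A ⊗ₖ (H⁻¹ * P)) *ᵥ x) (a, j) - ((A' ⊗ₖ (H⁻¹ * P')) *ᵥ x) (a, j)
        + c * (H⁻¹ *ᵥ e) j + c' * (H⁻¹ *ᵥ e') j)
      = -∑ b, A a b • (P *ᵥ fun k => x (b, k)) - ∑ b, A' a b • (P' *ᵥ fun k => x (b, k))
        + c • e + c' • e' := by
  have hblock : (fun j => -((A ⊗ₖ (H⁻¹ * P)) *ᵥ x) (a, j) - ((A' ⊗ₖ (H⁻¹ * P')) *ᵥ x) (a, j)
        + c * (H⁻¹ *ᵥ e) j + c' * (H⁻¹ *ᵥ e') j)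
      = H⁻¹ *ᵥ (-∑ b, A a b • (P *ᵥ fun k => x (b, k)) - ∑ b, A' a b • (P' *ᵥ fun k => x (b, k))
        + c • e + c' • e') := by
    funext j
    simp only [kronecker_mulVec_apply, mulVec_add, mulVec_sub, mulVec_neg, mulVec_sum,
      mulVec_smul, mulVec_mulVec, Pi.add_apply, Pi.sub_apply, Pi.neg_apply, Finset.sum_apply,
      Pi.smul_apply, smul_eq_mul]
  rw [hblock, mulVec_mulVec, mul_nonsing_inv _ hH, one_mulVec]

section Upwind

variable {ι : Type*} [Fintype ι] [DecidableEq ι] {H : Matrix ι ι ℝ}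

theorem mulVec_upwind_sat_rhs_fst (hH : IsUnit H.det) (Pp Pm : Matrix ι ι ℝ) (x : Fin 2 × ι → ℝ)
    (c c' : ℝ) (e e' : ι → ℝ) :
    H *ᵥ (fun j => -((((1/2 : ℝ) • !![-1, 1; 1, -1]) ⊗ₖ (H⁻¹ * Pp)) *ᵥ x) (0, j)
        - ((((1/2 : ℝ) • !![1, 1; 1, 1]) ⊗ₖ (H⁻¹ * Pm)) *ᵥ x) (0, j)
        + c * (H⁻¹ *ᵥ e) j + c' * (H⁻¹ *ᵥ e') j)
      = (1/2 : ℝ) • (Pp *ᵥ ((fun k => x (0, k)) - fun k => x (1, k)))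
        - (1/2 : ℝ) • (Pm *ᵥ ((fun k => x (0, k)) + fun k => x (1, k))) + c • e + c' • e' := by
  rw [mulVec_sat_rhs_block hH]
  simp only [Fin.sum_univ_two, Matrix.smul_apply, of_apply, cons_val', cons_val_zero, cons_val_one,
    cons_val_fin_one, smul_eq_mul, mulVec_sub, mulVec_add]
  module

theorem mulVec_upwind_sat_rhs_snd (hH : IsUnit H.det) (Pp Pm : Matrix ι ι ℝ) (x : Fin 2 × ι → ℝ)
    (c c' : ℝ) (e e' : ι → ℝ) :
    H *ᵥ (fun j => -((((1/2 : ℝ) • !![-1, 1; 1, -1]) ⊗ₖ (H⁻¹ * Pp)) *ᵥ x) (1, j)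
        - ((((1/2 : ℝ) • !![1, 1; 1, 1]) ⊗ₖ (H⁻¹ * Pm)) *ᵥ x) (1, j)
        + c * (H⁻¹ *ᵥ e) j + c' * (H⁻¹ *ᵥ e') j)
      = -((1/2 : ℝ) • (Pp *ᵥ ((fun k => x (0, k)) - fun k => x (1, k))))
        - (1/2 : ℝ) • (Pm *ᵥ ((fun k => x (0, k)) + fun k => x (1, k))) + c • e + c' • e' := by
  rw [mulVec_sat_rhs_block hH]
  simp only [Fin.sum_univ_two, Matrix.smul_apply, of_apply, cons_val', cons_val_zero, cons_val_one,
    cons_val_fin_one, smul_eq_mul, mulVec_sub, mulVec_add]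
  module

end Upwind

theorem upwind_sat_energy_rate_nonpos {n : ℕ} (hn : 1 < n) {Q B : Matrix (Fin n) (Fin n) ℝ}
    (hQ : (Q + Qᵀ).PosSemidef)
    (hB : B = diagonal (fun i => if i.val = 0 then (-1 : ℝ) else if i.val = n - 1 then 1 else 0))
    {α₀ α₁ τ₁ τ₂ τ₃ τ₄ : ℝ} (hα₀ : 0 ≤ α₀) (hα₁ : α₁ ≤ 0) (hτ₁ : τ₁ ≤ 0) (hτ₃ : τ₃ ≤ 0)
    (hst0 : (α₀ * τ₁ - τ₂ - 1) ^ 2 + 4 * α₀ * τ₁ ≤ 0)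
    (hst1 : (α₁ * τ₃ - τ₄ + 1) ^ 2 - 4 * α₁ * τ₃ ≤ 0)
    {e₁ eₙ : Fin n → ℝ} (he₁ : e₁ = fun i => if i.val = 0 then 1 else 0)
    (heₙ : eₙ = fun i => if i.val = n - 1 then 1 else 0) (u v : Fin n → ℝ) :
    let b₀ := u ⟨0, by omega⟩ + α₀ * v ⟨0, by omega⟩
    let b₁ := u ⟨n - 1, by omega⟩ + α₁ * v ⟨n - 1, by omega⟩
    u ⬝ᵥ ((1/2 : ℝ) • ((-Qᵀ + (1/2 : ℝ) • B) *ᵥ (u - v))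
        - (1/2 : ℝ) • ((Q + (1/2 : ℝ) • B) *ᵥ (u + v)) + (τ₁ * b₀) • e₁ + (τ₃ * b₁) • eₙ)
      + v ⬝ᵥ (-((1/2 : ℝ) • ((-Qᵀ + (1/2 : ℝ) • B) *ᵥ (u - v)))
        - (1/2 : ℝ) • ((Q + (1/2 : ℝ) • B) *ᵥ (u + v)) + (τ₂ * b₀) • e₁ + (τ₄ * b₁) • eₙ)
      ≤ 0 := by
  dsimp only
  have hdiff := dotProduct_mulVec_nonneg_of_posSemidef_add_transpose hQ (u - v)
  have hsum := dotProduct_mulVec_nonneg_of_posSemidef_add_transpose hQ (u + v)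
  have hleft := left_boundary_form_nonpos (x := u ⟨0, by omega⟩) (y := v ⟨0, by omega⟩)
    hα₀ hτ₁ hst0
  have hright := right_boundary_form_nonpos (x := u ⟨n - 1, by omega⟩) (y := v ⟨n - 1, by omega⟩)
    hα₁ hτ₃ hst1
  subst hB he₁ heₙ
  simp only [add_mulVec, neg_mulVec, smul_mulVec, mulVec_add, mulVec_sub, dotProduct_add,
    dotProduct_sub, dotProduct_neg, dotProduct_smul, add_dotProduct, sub_dotProduct, smul_eq_mul,
    dotProduct_transpose_mulVec, dotProduct_boundary_mulVec hn,
    dotProduct_ite_val_eq (show 0 < n by omega), dotProduct_ite_val_eq (show n - 1 < n by omega)]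
    at hdiff hsum ⊢
  linarith

/-- Energy stability of the upwind SBP-SAT semidiscretization of the first
order hyperbolic system `𝐔ₜ + A𝐔ₓ = 0`, `A = [[0,1],[1,0]]`, with the flux
splitting `A = Aₘ + Aₚ` and SAT penalties satisfying the stability
conditions: the discrete energy `uᵀHu + vᵀHv` is nonincreasing. -/
theorem stmt_6 (n : ℕ) (hn : 2 ≤ n)
    (H Qm : Matrix (Fin n) (Fin n) ℝ)
    (hH : H.PosDef) (hQ : (Qm + Qmᵀ).PosSemidef)
    (Qp B Dm Dp : Matrix (Fin n) (Fin n) ℝ)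
    (hQp : Qp = -Qmᵀ)
    (hB : B = Matrix.diagonal (fun i =>
      if i.val = 0 then (-1 : ℝ) else if i.val = n - 1 then 1 else 0))
    (hDm : Dm = H⁻¹ * (Qm + (1/2 : ℝ) • B))
    (hDp : Dp = H⁻¹ * (Qp + (1/2 : ℝ) • B))
    (Am Ap : Matrix (Fin 2) (Fin 2) ℝ)
    (hAm : Am = (1/2 : ℝ) • !![1, 1; 1, 1])
    (hAp : Ap = (1/2 : ℝ) • !![-1, 1; 1, -1])
    (α₀ α₁ τ₁ τ₂ τ₃ τ₄ : ℝ)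
    (hα₀ : 0 ≤ α₀) (hα₁ : α₁ ≤ 0) (hτ₁ : τ₁ ≤ 0) (hτ₃ : τ₃ ≤ 0)
    (hst0 : (α₀*τ₁ - τ₂ - 1)^2 + 4*α₀*τ₁ ≤ 0)
    (hst1 : (α₁*τ₃ - τ₄ + 1)^2 - 4*α₁*τ₃ ≤ 0)
    (e₁ eₙ : Fin n → ℝ)
    (he₁ : e₁ = fun i => if i.val = 0 then 1 else 0)
    (heₙ : eₙ = fun i => if i.val = n - 1 then 1 else 0)
    (w : ℝ → Fin 2 × Fin n → ℝ)
    (b₀ b₁ : ℝ → ℝ)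
    (hb₀ : ∀ t, b₀ t = w t (0, ⟨0, by omega⟩) + α₀ * w t (1, ⟨0, by omega⟩))
    (hb₁ : ∀ t, b₁ t = w t (0, ⟨n - 1, by omega⟩) + α₁ * w t (1, ⟨n - 1, by omega⟩))
    (hw : ∀ t : ℝ, HasDerivAt w
      (fun p => -(((Ap ⊗ₖ Dp) *ᵥ w t) p) - (((Am ⊗ₖ Dm) *ᵥ w t) p)
        + (if p.1 = 0 then τ₁ else τ₂) * b₀ t * (H⁻¹ *ᵥ e₁) p.2
        + (if p.1 = 0 then τ₃ else τ₄) * b₁ t * (H⁻¹ *ᵥ eₙ) p.2) t) :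
    Antitone (fun t =>
      (fun j => w t (0, j)) ⬝ᵥ (H *ᵥ fun j => w t (0, j)) +
      (fun j => w t (1, j)) ⬝ᵥ (H *ᵥ fun j => w t (1, j))) := by
  subst hAp hAm hQp hDp hDm
  have hH₀ : IsUnit H.det := isUnit_iff_ne_zero.mpr hH.det_pos.ne'
  have hHs : H.IsSymm := isHermitian_iff_isSymm.mp hH.1
  have hblock := fun t (a : Fin 2) => hasDerivAt_pi.mpr fun j => hasDerivAt_pi.mp (hw t) (a, j)
  have hE := fun t => ((hblock t 0).dotProduct_mulVec_self hHs).fun_add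
    ((hblock t 1).dotProduct_mulVec_self hHs)
  refine antitone_of_deriv_nonpos (fun t => (hE t).differentiableAt) fun t => ?_
  rw [(hE t).deriv]
  simp only [↓reduceIte, one_ne_zero]
  rw [mulVec_upwind_sat_rhs_fst hH₀, mulVec_upwind_sat_rhs_snd hH₀]
  have := upwind_sat_energy_rate_nonpos hn hQ hB hα₀ hα₁ hτ₁ hτ₃ hst0 hst1 he₁ heₙ
    (fun j => w t (0, j)) (fun j => w t (1, j))
  rw [hb₀, hb₁]
  linarith
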